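/- arXiv:1607.04817 — 4 statements merged into one kernel-verified Lean document; each statement's English description precedes it below -/
import Mathlib

section
/- Let D ≥ 1 be an integer, p ∈ [1,∞), α > 0, b > 0, and h a natural number. Let ω = ∏_{i=1}^{D} [a_i, a_i + s_i] ⊆ ℝ^D be an axis-aligned box with center c whose side lengths satisfy 0 < s_i ≤ 3^{−⌊h/D⌋} for every i. Then for every x ∈ ω, b·‖x−c‖_p^α ≤ b·D^{α/p}·3^{−α⌊h/D⌋} ≤ b·3^{α}·D^{α/p}·3^{−αh/D}, where ‖y‖_p = (∑_{i=1}^{D} |y_i|^p)^{1/p}. -/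
/-! Each coordinate of `x - c` is at most half a side, hence at most `3^{-⌊h/D⌋}`, so the
`p`-norm of `x - c` is at most `D^{1/p}·3^{-⌊h/D⌋}`. The second inequality is
`h/D - 1 ≤ ⌊h/D⌋`, exponentiated. -/

lemma abs_sub_midpoint_le {a s x : ℝ} (hx : x ∈ Set.Icc a (a + s)) :
    |x - (a + s / 2)| ≤ s / 2 := by
  rw [abs_le]
  constructor <;> linarith [hx.1, hx.2]

lemma sum_rpow_rpow_inv_le_of_abs_le {ι : Type*} [Fintype ι] {p t : ℝ} (hp : 0 < p)
    (ht : 0 ≤ t) {y : ι → ℝ} (hy : ∀ i, |y i| ≤ t) :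
    (∑ i, |y i| ^ p) ^ (1 / p) ≤ (Fintype.card ι : ℝ) ^ (1 / p) * t := by
  have hsum : ∑ i, |y i| ^ p ≤ Fintype.card ι * t ^ p := by
    calc ∑ i, |y i| ^ p ≤ ∑ _i : ι, t ^ p :=
          Finset.sum_le_sum fun i _ => Real.rpow_le_rpow (abs_nonneg _) (hy i) hp.le
      _ = Fintype.card ι * t ^ p := by simp
  calc (∑ i, |y i| ^ p) ^ (1 / p)
      ≤ (Fintype.card ι * t ^ p) ^ (1 / p) := by gcongr
    _ = (Fintype.card ι : ℝ) ^ (1 / p) * t := by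
      rw [Real.mul_rpow (by positivity) (by positivity), one_div,
        Real.rpow_rpow_inv ht hp.ne']

lemma lpNorm_rpow_le_of_abs_le {ι : Type*} [Fintype ι] {p α t : ℝ} (hp : 0 < p)
    (hα : 0 ≤ α) (ht : 0 ≤ t) {y : ι → ℝ} (hy : ∀ i, |y i| ≤ t) :
    ((∑ i, |y i| ^ p) ^ (1 / p)) ^ α ≤ (Fintype.card ι : ℝ) ^ (α / p) * t ^ α := by
  calc ((∑ i, |y i| ^ p) ^ (1 / p)) ^ α
      ≤ ((Fintype.card ι : ℝ) ^ (1 / p) * t) ^ α := by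
        gcongr
        exact sum_rpow_rpow_inv_le_of_abs_le hp ht hy
    _ = (Fintype.card ι : ℝ) ^ (α / p) * t ^ α := by
      rw [Real.mul_rpow (by positivity) ht, ← Real.rpow_mul (by positivity)]
      ring_nf

lemma rpow_neg_mul_nat_div_le {r α : ℝ} (hr : 1 ≤ r) (hα : 0 ≤ α) (h D : ℕ) :
    r ^ (-(α * ((h / D : ℕ) : ℝ))) ≤ r ^ α * r ^ (-(α * (h : ℝ) / (D : ℝ))) := by
  have hfloor : (h : ℝ) / D < (h / D : ℕ) + 1 := by
    simpa only [Nat.floor_div_eq_div] using Nat.lt_floor_add_one ((h : ℝ) / D)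
  rw [← Real.rpow_add (by linarith)]
  apply Real.rpow_le_rpow_of_exponent_le hr
  rw [mul_div_assoc]
  nlinarith

open Finset in
theorem stmt_4_general (D : ℕ) (p α b : ℝ) (hp : 1 ≤ p) (hα : 0 < α) (hb : 0 < b)
    (h : ℕ) (a s : Fin D → ℝ)
    (hs : ∀ i, s i ≤ (3 : ℝ) ^ (-(((h / D : ℕ)) : ℝ)))
    (c : Fin D → ℝ) (hc : ∀ i, c i = a i + s i / 2)
    (x : Fin D → ℝ) (hx : ∀ i, x i ∈ Set.Icc (a i) (a i + s i)) :
    b * ((∑ i, |x i - c i| ^ p) ^ (1 / p)) ^ α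
        ≤ b * (D : ℝ) ^ (α / p) * (3 : ℝ) ^ (-(α * (((h / D : ℕ)) : ℝ))) ∧
    b * (D : ℝ) ^ (α / p) * (3 : ℝ) ^ (-(α * (((h / D : ℕ)) : ℝ)))
        ≤ b * (3 : ℝ) ^ α * (D : ℝ) ^ (α / p) * (3 : ℝ) ^ (-(α * (h : ℝ) / (D : ℝ))) := by
  have hcoord : ∀ i, |x i - c i| ≤ (3 : ℝ) ^ (-(((h / D : ℕ)) : ℝ)) := fun i => by
    have hsi : 0 ≤ s i := by linarith [(hx i).1, (hx i).2]
    rw [hc i]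
    linarith [abs_sub_midpoint_le (hx i), hs i]
  have hnorm := lpNorm_rpow_le_of_abs_le (p := p) (by linarith) hα.le (by positivity) hcoord
  have hpow : ((3 : ℝ) ^ (-(((h / D : ℕ)) : ℝ))) ^ α
      = (3 : ℝ) ^ (-(α * (((h / D : ℕ)) : ℝ))) := by
    rw [← Real.rpow_mul (by norm_num), neg_mul_comm, mul_neg, mul_comm]
  rw [Fintype.card_fin, hpow] at hnorm
  constructor
  · rw [mul_assoc]
    gcongr
  · have hexp := rpow_neg_mul_nat_div_le (r := 3) (by norm_num) hα.le h D
    linarith [mul_le_mul_of_nonneg_left hexp (by positivity : 0 ≤ b * (D : ℝ) ^ (α / p))]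

open Finset in
/-- Decreasing-diameter check: an axis-aligned box in `ℝ^D` divided `h` times has
every side of length at most `3^{−⌊h/D⌋}`; for any point `x` of the box with center `c`,
`b·‖x−c‖_p^α ≤ b·D^{α/p}·3^{−α⌊h/D⌋} ≤ b·3^{α}·D^{α/p}·3^{−αh/D}`. -/
theorem stmt_4 (D : ℕ) (hD : 1 ≤ D) (p α b : ℝ) (hp : 1 ≤ p) (hα : 0 < α) (hb : 0 < b)
    (h : ℕ) (a s : Fin D → ℝ)
    (hs0 : ∀ i, 0 < s i) (hs : ∀ i, s i ≤ (3 : ℝ) ^ (-(((h / D : ℕ)) : ℝ)))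
    (c : Fin D → ℝ) (hc : ∀ i, c i = a i + s i / 2)
    (x : Fin D → ℝ) (hx : ∀ i, x i ∈ Set.Icc (a i) (a i + s i)) :
    b * ((∑ i, |x i - c i| ^ p) ^ (1 / p)) ^ α
        ≤ b * (D : ℝ) ^ (α / p) * (3 : ℝ) ^ (-(α * (((h / D : ℕ)) : ℝ))) ∧
    b * (D : ℝ) ^ (α / p) * (3 : ℝ) ^ (-(α * (((h / D : ℕ)) : ℝ)))
        ≤ b * (3 : ℝ) ^ α * (D : ℝ) ^ (α / p) * (3 : ℝ) ^ (-(α * (h : ℝ) / (D : ℝ))) :=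
  stmt_4_general D p α b hp hα hb h a s hs c hc x hx
end

section
/- Let D ≥ 1 be an integer, p ∈ [1,∞), α > 0, b > 0, and h a natural number. Let ω = ∏_{i=1}^{D} [a_i, a_i + s_i] ⊆ ℝ^D be an axis-aligned box with center c whose side lengths satisfy s_i ≥ 3^{−⌊h/D⌋−1} for every i. Set δ(h) = b·3^{α}·D^{α/p}·3^{−αh/D} and ν = 2^{−α}·3^{−2α}·D^{−α/p}. Then the set {x ∈ ℝ^D : b·‖x−c‖_p^α ≤ ν·δ(h)} is contained in ω, where ‖y‖_p = (∑_{i=1}^{D} |y_i|^p)^{1/p}. -/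
open Finset in
/-- Well-shaped-cell check: an axis-aligned box in `ℝ^D` divided `h` times has every side
of length at least `3^{−⌊h/D⌋−1}`; with `δ(h) = b·3^α·D^{α/p}·3^{−αh/D}` and
`ν = 2^{−α}·3^{−2α}·D^{−α/p}`, the ℓ-ball `{x : b·‖x−c‖_p^α ≤ ν·δ(h)}` centered at the
box's center `c` is contained in the box. -/
theorem stmt_5 (D : ℕ) (hD : 1 ≤ D) (p α b : ℝ) (hp : 1 ≤ p) (hα : 0 < α) (hb : 0 < b)
    (h : ℕ) (a s : Fin D → ℝ)
    (hs0 : ∀ i, 0 < s i) (hs : ∀ i, (3 : ℝ) ^ (-(((h / D : ℕ)) : ℝ) - 1) ≤ s i)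
    (c : Fin D → ℝ) (hc : ∀ i, c i = a i + s i / 2)
    (δ ν : ℝ)
    (hδ : δ = b * (3 : ℝ) ^ α * (D : ℝ) ^ (α / p) * (3 : ℝ) ^ (-(α * (h : ℝ) / (D : ℝ))))
    (hν : ν = (2 : ℝ) ^ (-α) * (3 : ℝ) ^ (-(2 * α)) * (D : ℝ) ^ (-(α / p))) :
    {x : Fin D → ℝ | b * ((∑ i, |x i - c i| ^ p) ^ (1 / p)) ^ α ≤ ν * δ}
      ⊆ {x : Fin D → ℝ | ∀ i, x i ∈ Set.Icc (a i) (a i + s i)} := by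
  intro x hx
  simp only [Set.mem_setOf_eq] at hx ⊢
  have hDpos : (0:ℝ) < (D:ℝ) := by exact_mod_cast hD
  have hp0 : (0:ℝ) < p := lt_of_lt_of_le one_pos hp
  set r : ℝ := (2:ℝ)⁻¹ * (3:ℝ) ^ (-((h:ℝ)/(D:ℝ)) - 1) with hr
  have hrpos : 0 < r := by positivity
  have key : ν * δ = b * r ^ α := by
    rw [hδ, hν, hr, Real.mul_rpow (by norm_num) (by positivity),
        Real.inv_rpow (by norm_num), ← Real.rpow_neg (by norm_num : (0:ℝ) ≤ 2),
        ← Real.rpow_mul (by norm_num : (0:ℝ) ≤ 3)]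
    have e1 : (D:ℝ) ^ (-(α/p)) * (D:ℝ) ^ (α/p) = 1 := by
      rw [← Real.rpow_add hDpos]; simp
    have e2 : (3:ℝ) ^ (-(2*α)) * ((3:ℝ) ^ α * (3:ℝ) ^ (-(α * (h:ℝ) / (D:ℝ))))
        = (3:ℝ) ^ ((-((h:ℝ)/(D:ℝ)) - 1) * α) := by
      rw [← Real.rpow_add (by norm_num : (0:ℝ) < 3),
          ← Real.rpow_add (by norm_num : (0:ℝ) < 3)]
      congr 1; field_simp; ring
    calc (2:ℝ) ^ (-α) * (3:ℝ) ^ (-(2*α)) * (D:ℝ) ^ (-(α/p)) *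
          (b * (3:ℝ) ^ α * (D:ℝ) ^ (α/p) * (3:ℝ) ^ (-(α * (h:ℝ) / (D:ℝ))))
        = b * ((2:ℝ) ^ (-α) * ((D:ℝ) ^ (-(α/p)) * (D:ℝ) ^ (α/p)) *
            ((3:ℝ) ^ (-(2*α)) * ((3:ℝ) ^ α * (3:ℝ) ^ (-(α * (h:ℝ) / (D:ℝ)))))) := by ring
      _ = b * ((2:ℝ) ^ (-α) * (3:ℝ) ^ ((-((h:ℝ)/(D:ℝ)) - 1) * α)) := by rw [e1, e2]; ring
  -- from hx : b * N^α ≤ b * r^α get N ≤ r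
  set N : ℝ := (∑ i, |x i - c i| ^ p) ^ (1/p) with hN
  have hNnn : 0 ≤ N :=
    Real.rpow_nonneg (Finset.sum_nonneg fun i _ => Real.rpow_nonneg (abs_nonneg _) _) _
  have hNr : N ≤ r := by
    have h1 : N ^ α ≤ r ^ α := by
      rw [key] at hx
      exact le_of_mul_le_mul_left hx hb
    exact (Real.rpow_le_rpow_iff hNnn hrpos.le hα).mp h1
  -- r ≤ s i / 2
  intro i
  have hterm : |x i - c i| ≤ N := by
    have h2 : |x i - c i| ^ p ≤ ∑ j, |x j - c j| ^ p :=
      Finset.single_le_sum (f := fun j => |x j - c j| ^ p) (fun j _ => Real.rpow_nonneg (abs_nonneg _) _) (Finset.mem_univ i)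
    have h3 : (|x i - c i| ^ p) ^ (1/p) ≤ N :=
      Real.rpow_le_rpow (Real.rpow_nonneg (abs_nonneg _) _) h2 (by positivity)
    rwa [← Real.rpow_mul (abs_nonneg _),
        show p * (1/p) = 1 by field_simp, Real.rpow_one] at h3
  have hfloor : ((h / D : ℕ) : ℝ) ≤ (h:ℝ) / (D:ℝ) := Nat.cast_div_le
  have hrs : r ≤ s i / 2 := by
    have h4 : (3:ℝ) ^ (-((h:ℝ)/(D:ℝ)) - 1) ≤ (3:ℝ) ^ (-(((h / D : ℕ)) : ℝ) - 1) :=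
      (Real.rpow_le_rpow_left_iff (by norm_num)).mpr (by linarith)
    have := hs i
    rw [hr]; linarith
  have habs : |x i - c i| ≤ s i / 2 := le_trans hterm (le_trans hNr hrs)
  have := abs_le.mp habs
  constructor <;> [linarith [hc i, this.1]; linarith [hc i, this.2]]
end

section
/- Let D ≥ 1 be an integer, p ∈ [1,∞), α > 0, b > 0, θ ∈ (0,1), and ν > 0. Let f : [0,1]^D → ℝ and x* ∈ [0,1]^D satisfy f(x*) ≥ f(x) + θ·b·‖x − x*‖_p^α for all x ∈ [0,1]^D. Then there exists a constant C > 0, independent of ε, such that for every ε > 0, every finite family of points x_1, …, x_m in X_ε := {x ∈ [0,1]^D : f(x) + ε ≥ f(x*)} for which the sets {x ∈ ℝ^D : b·‖x − x_i‖_p^α < ν·ε} are pairwise disjoint satisfies m ≤ C. In other words, the near-optimality dimension of f with respect to the semi-metric ℓ(x,y) = b·‖x−y‖_p^α is zero. -/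
open MeasureTheory in
private lemma stmt8_aux {x y e : ℝ} (hx : 0 ≤ x) (he : 0 < e) (h : x ^ e ≤ y ^ e)
    (hy : 0 ≤ y) : x ≤ y := by
  calc x = (x ^ e) ^ e⁻¹ := (Real.rpow_rpow_inv hx he.ne').symm
    _ ≤ (y ^ e) ^ e⁻¹ := Real.rpow_le_rpow (Real.rpow_nonneg hx _) h (by positivity)
    _ = y := Real.rpow_rpow_inv hy he.ne'

open MeasureTheory ENNReal in
open Finset in
/-- Near-optimality dimension zero: if `f(x*) ≥ f(x) + θ·b·‖x−x*‖_p^α` on `[0,1]^D`,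
then there is a constant `C > 0` such that for every `ε > 0`, any finite family of points
of the ε-optimal set whose ℓ-balls of ℓ-radius `ν·ε` are pairwise disjoint has
cardinality at most `C`. -/
theorem stmt_8 (D : ℕ) (hD : 1 ≤ D) (p α b θ ν : ℝ) (hp : 1 ≤ p) (hα : 0 < α)
    (hb : 0 < b) (hθ0 : 0 < θ) (hθ1 : θ < 1) (hν : 0 < ν)
    (f : (Fin D → ℝ) → ℝ) (xstar : Fin D → ℝ)
    (hxstar : xstar ∈ Set.Icc (0 : Fin D → ℝ) 1)
    (hf : ∀ x ∈ Set.Icc (0 : Fin D → ℝ) 1,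
      f xstar ≥ f x + θ * (b * ((∑ i, |x i - xstar i| ^ p) ^ (1 / p)) ^ α)) :
    ∃ C : ℝ, 0 < C ∧ ∀ ε : ℝ, 0 < ε → ∀ (m : ℕ) (xs : Fin m → Fin D → ℝ),
      (∀ i, xs i ∈ Set.Icc (0 : Fin D → ℝ) 1 ∧ f (xs i) + ε ≥ f xstar) →
      (Pairwise fun i i' =>
        Disjoint {y : Fin D → ℝ | b * ((∑ j, |y j - xs i j| ^ p) ^ (1 / p)) ^ α < ν * ε}
                 {y : Fin D → ℝ | b * ((∑ j, |y j - xs i' j| ^ p) ^ (1 / p)) ^ α < ν * ε}) →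
      (m : ℝ) ≤ C := by
  have hp0 : 0 < p := lt_of_lt_of_le one_pos hp
  have hDpos : (0:ℝ) < (D:ℝ) := by exact_mod_cast Nat.lt_of_lt_of_le Nat.zero_lt_one hD
  set K : ℝ := ((θ * ν)⁻¹) ^ (1/α) with hK
  have hK0 : 0 < K := Real.rpow_pos_of_pos (by positivity) _
  set Dp : ℝ := (D:ℝ) ^ (1/p) with hDp
  have hDp0 : 0 < Dp := Real.rpow_pos_of_pos hDpos _
  refine ⟨(Dp * (1 + K)) ^ D, by positivity, ?_⟩
  intro ε hε m xs h hdisj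
  set r : ℝ := (ν * ε / b) ^ (1/α) with hrdef
  set R : ℝ := (ε / (θ * b)) ^ (1/α) with hRdef
  have hr0 : 0 < r := Real.rpow_pos_of_pos (by positivity) _
  have hR0 : 0 < R := Real.rpow_pos_of_pos (by positivity) _
  have hrα : r ^ α = ν * ε / b := by
    rw [hrdef, one_div, Real.rpow_inv_rpow (by positivity) hα.ne']
  have hRα : R ^ α = ε / (θ * b) := by
    rw [hRdef, one_div, Real.rpow_inv_rpow (by positivity) hα.ne']
  have hRK : R = r * K := by
    have heq : ε / (θ * b) = (ν * ε / b) * (θ * ν)⁻¹ := by field_simp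
    rw [hRdef, heq, Real.mul_rpow (by positivity) (by positivity)]
  set s : ℝ := r / Dp with hs
  have hs0 : 0 < s := by positivity
  -- the norm function
  set N : (Fin D → ℝ) → (Fin D → ℝ) → ℝ :=
    fun x y => (∑ j, |x j - y j| ^ p) ^ (1/p) with hN
  have hsum_nonneg : ∀ x y : Fin D → ℝ, 0 ≤ ∑ j, |x j - y j| ^ p := fun x y =>
    Finset.sum_nonneg fun j _ => Real.rpow_nonneg (abs_nonneg _) _
  have hN0 : ∀ x y, 0 ≤ N x y := fun x y => Real.rpow_nonneg (hsum_nonneg x y) _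
  have hcoord : ∀ (x y : Fin D → ℝ) (j : Fin D), |x j - y j| ≤ N x y := by
    intro x y j
    have h1 : |x j - y j| ^ p ≤ ∑ j', |x j' - y j'| ^ p :=
      Finset.single_le_sum (f := fun j' => |x j' - y j'| ^ p)
        (fun j' _ => Real.rpow_nonneg (abs_nonneg _) _) (Finset.mem_univ j)
    calc |x j - y j| = (|x j - y j| ^ p) ^ (1/p) := by
          rw [one_div, Real.rpow_rpow_inv (abs_nonneg _) hp0.ne']
      _ ≤ N x y := Real.rpow_le_rpow (Real.rpow_nonneg (abs_nonneg _) _) h1 (by positivity)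
  -- centers are within R of xstar
  have hcenter : ∀ i, N (xs i) xstar ≤ R := by
    intro i
    have h1 := hf (xs i) (h i).1
    have h2 := (h i).2
    have h3 : θ * (b * (N (xs i) xstar) ^ α) ≤ ε := by
      simp only [hN]; linarith
    have h4 : (N (xs i) xstar) ^ α ≤ R ^ α := by
      rw [hRα, le_div_iff₀ (by positivity)]
      nlinarith [h3]
    exact stmt8_aux (hN0 _ _) hα h4 hR0.le
  -- small open cubes inside the balls
  set S : Fin m → Set (Fin D → ℝ) := fun i =>
    {y : Fin D → ℝ | b * ((∑ j, |y j - xs i j| ^ p) ^ (1 / p)) ^ α < ν * ε} with hS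
  set cube : Fin m → Set (Fin D → ℝ) := fun i =>
    Set.univ.pi fun j => Set.Ioo (xs i j - s) (xs i j + s) with hcube
  have hDpP : Dp ^ p = (D:ℝ) := by
    rw [hDp, one_div, Real.rpow_inv_rpow hDpos.le hp0.ne']
  have hcube_sub : ∀ i, cube i ⊆ S i := by
    intro i y hy
    simp only [hcube, Set.mem_pi, Set.mem_univ, Set.mem_Ioo, forall_true_left] at hy
    have habs : ∀ j, |y j - xs i j| < s := by
      intro j; rw [abs_sub_lt_iff]; constructor <;> [linarith [(hy j).2]; linarith [(hy j).1]]
    have hsumlt : ∑ j, |y j - xs i j| ^ p < ∑ _j : Fin D, s ^ p := by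
      apply Finset.sum_lt_sum_of_nonempty
      · have : Nonempty (Fin D) := Fin.pos_iff_nonempty.mp (Nat.lt_of_lt_of_le Nat.zero_lt_one hD)
        exact Finset.univ_nonempty
      · intro j _
        exact Real.rpow_lt_rpow (abs_nonneg _) (habs j) hp0
    have hDs : ∑ _j : Fin D, s ^ p = r ^ p := by
      rw [Finset.sum_const, Finset.card_univ, Fintype.card_fin, nsmul_eq_mul, hs,
        Real.div_rpow hr0.le hDp0.le, hDpP]
      field_simp
    have hNlt : N y (xs i) < r := by
      have : ∑ j, |y j - xs i j| ^ p < r ^ p := by rw [← hDs]; exact hsumlt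
      calc N y (xs i) = (∑ j, |y j - xs i j| ^ p) ^ (1/p) := rfl
        _ < (r ^ p) ^ (1/p) := Real.rpow_lt_rpow (hsum_nonneg _ _) this (by positivity)
        _ = r := by rw [one_div, Real.rpow_rpow_inv hr0.le hp0.ne']
    have : (N y (xs i)) ^ α < r ^ α := Real.rpow_lt_rpow (hN0 _ _) hNlt hα
    show b * ((∑ j, |y j - xs i j| ^ p) ^ (1 / p)) ^ α < ν * ε
    rw [hrα] at this
    calc b * ((∑ j, |y j - xs i j| ^ p) ^ (1 / p)) ^ α = b * (N y (xs i)) ^ α := rfl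
      _ < b * (ν * ε / b) := by
          exact mul_lt_mul_of_pos_left this hb
      _ = ν * ε := by field_simp
  -- balls inside the big closed cube around xstar
  set bigcube : Set (Fin D → ℝ) :=
    Set.univ.pi fun j => Set.Icc (xstar j - (R + r)) (xstar j + (R + r)) with hbig
  have hball_sub : ∀ i, S i ⊆ bigcube := by
    intro i y hy
    simp only [hS, Set.mem_setOf_eq] at hy
    have hNy : N y (xs i) ≤ r := by
      have h1 : (N y (xs i)) ^ α ≤ r ^ α := by
        rw [hrα]
        have := hN0 y (xs i)
        calc (N y (xs i)) ^ α ≤ (N y (xs i)) ^ α := le_refl _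
          _ ≤ ν * ε / b := by
              rw [le_div_iff₀ hb]
              calc (N y (xs i)) ^ α * b = b * (N y (xs i)) ^ α := by ring
                _ ≤ ν * ε := hy.le
      exact stmt8_aux (hN0 _ _) hα h1 hr0.le
    simp only [hbig, Set.mem_pi, Set.mem_univ, Set.mem_Icc, forall_true_left]
    intro j
    have h1 : |y j - xstar j| ≤ R + r := by
      calc |y j - xstar j| ≤ |y j - xs i j| + |xs i j - xstar j| := by
            have := abs_sub_le (y j) (xs i j) (xstar j); linarith
        _ ≤ N y (xs i) + N (xs i) xstar := add_le_add (hcoord _ _ _) (hcoord _ _ _)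
        _ ≤ r + R := add_le_add hNy (hcenter i)
        _ = R + r := by ring
    rw [abs_sub_le_iff] at h1
    constructor <;> linarith [h1.1, h1.2]
  -- measure argument
  have hmeas : ∀ i, MeasurableSet (cube i) := by
    intro i
    exact MeasurableSet.univ_pi fun j => measurableSet_Ioo
  have hpd : Pairwise (Function.onFun Disjoint cube) := by
    intro i i' hne
    exact (hdisj hne).mono (hcube_sub i) (hcube_sub i')
  have hvol_cube : ∀ i, volume (cube i) = ENNReal.ofReal (2*s) ^ D := by
    intro i
    rw [hcube]
    rw [MeasureTheory.volume_pi_pi]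
    have : ∀ j : Fin D, volume (Set.Ioo (xs i j - s) (xs i j + s))
        = ENNReal.ofReal (2*s) := by
      intro j; rw [Real.volume_Ioo]; congr 1; ring
    simp only [this, Finset.prod_const, Finset.card_univ, Fintype.card_fin]
  have hvol_big : volume bigcube = ENNReal.ofReal (2*(R+r)) ^ D := by
    rw [hbig, MeasureTheory.volume_pi_pi]
    have : ∀ j : Fin D, volume (Set.Icc (xstar j - (R+r)) (xstar j + (R+r)))
        = ENNReal.ofReal (2*(R+r)) := by
      intro j; rw [Real.volume_Icc]; congr 1; ring
    simp only [this, Finset.prod_const, Finset.card_univ, Fintype.card_fin]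
  have hunion : volume (⋃ i, cube i) = (m : ℝ≥0∞) * ENNReal.ofReal (2*s) ^ D := by
    rw [MeasureTheory.measure_iUnion hpd hmeas, tsum_fintype]
    simp only [hvol_cube, Finset.sum_const, Finset.card_univ, Fintype.card_fin,
      nsmul_eq_mul]
  have hle : (m : ℝ≥0∞) * ENNReal.ofReal (2*s) ^ D ≤ ENNReal.ofReal (2*(R+r)) ^ D := by
    rw [← hunion, ← hvol_big]
    exact measure_mono (Set.iUnion_subset fun i => (hcube_sub i).trans (hball_sub i))
  have hsplit : ENNReal.ofReal (2*(R+r)) = ENNReal.ofReal (2*s) * ENNReal.ofReal (Dp * (1+K)) := by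
    rw [← ENNReal.ofReal_mul (by positivity)]
    congr 1
    have : R + r = r * (1 + K) := by rw [hRK]; ring
    rw [this, hs]
    field_simp
  rw [hsplit, mul_pow, mul_comm (ENNReal.ofReal (2*s) ^ D)] at hle
  have hne0 : ENNReal.ofReal (2*s) ^ D ≠ 0 := by
    apply pow_ne_zero
    simp only [ne_eq, ENNReal.ofReal_eq_zero, not_le]
    positivity
  have hnetop : ENNReal.ofReal (2*s) ^ D ≠ ⊤ := by
    apply pow_ne_top ENNReal.ofReal_ne_top
  have hfin : (m : ℝ≥0∞) ≤ ENNReal.ofReal (Dp * (1+K)) ^ D :=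
    (ENNReal.mul_le_mul_iff_left hne0 hnetop).mp hle
  rw [← ENNReal.ofReal_pow (by positivity), ← ENNReal.ofReal_natCast m] at hfin
  exact (ENNReal.ofReal_le_ofReal_iff (by positivity)).mp hfin
end

section
/- Let C > 0, c > 0, γ ∈ (0,1), d > 0 be reals, let D and w be positive integers, let M > 0 and n > 0 be reals, and let H be a natural number. If n ≤ C·c^{−d}·(M/w)·((γ^{−w}−1)/(γ^{−1}−1))·∑_{k=0}^{H} γ^{−kwd/D}, then c·γ^{(wH−w)/D} ≤ ( (n/C)·(w/M)·((γ^{−w}−1)/(γ^{−1}−1))^{−1}·(γ^{wd/D} − γ^{2wd/D}) )^{−1/d}. -/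
/-!
Put `q = γ^{-wd/D} > 1`. The sum in the hypothesis is then the geometric sum `∑_{k ≤ H} q^k`,
which is at most `q^{H+1}/(q - 1)`, and `γ^{wd/D} - γ^{2wd/D} = (q - 1)/q²`. Hence the hypothesis
rearranges to: the quantity in the outer brackets is at most `c^{-d} q^{H-1}`, which is
`(c γ^{(wH-w)/D})^{-d}`. Raising both sides to the decreasing power `-1/d` gives the claim.
-/

theorem inv_sub_inv_sq_eq {K : Type*} [Field K] (q : K) : q⁻¹ - q⁻¹ ^ 2 = (q - 1) / q ^ 2 := by
  rcases eq_or_ne q 0 with rfl | hq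
  · simp
  · field_simp

section LinearOrderedField

variable {K : Type*} [Field K] [LinearOrder K] [IsStrictOrderedRing K]

theorem geom_sum_le_pow_div_sub_one {q : K} (hq : 1 < q) (N : ℕ) :
    ∑ i ∈ Finset.range N, q ^ i ≤ q ^ N / (q - 1) := by
  rw [geom_sum_eq hq.ne', div_le_div_iff_of_pos_right (sub_pos.2 hq)]
  linarith

theorem div_mul_inv_sub_inv_sq_le_of_le_mul_geom_sum {q C e n : K} (hq : 1 < q) (hC : 0 < C)
    (he : 0 ≤ e) {H : ℕ} (h : n ≤ C * e * ∑ k ∈ Finset.range (H + 1), q ^ k) :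
    n / C * (q⁻¹ - q⁻¹ ^ 2) ≤ e * (q ^ H * q⁻¹) := by
  have hq0 : 0 < q := zero_lt_one.trans hq
  have hq1 : 0 < q - 1 := sub_pos.2 hq
  rw [inv_sub_inv_sq_eq]
  calc n / C * ((q - 1) / q ^ 2)
      ≤ e * (q ^ (H + 1) / (q - 1)) * ((q - 1) / q ^ 2) := by
        gcongr
        rw [div_le_iff₀ hC, mul_comm _ C, ← mul_assoc]
        exact h.trans (by gcongr; exact geom_sum_le_pow_div_sub_one hq _)
    _ = e * (q ^ H * q⁻¹) := by field_simp; ring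

end LinearOrderedField

theorem Real.one_lt_rpow_neg {γ a : ℝ} (hγ0 : 0 < γ) (hγ1 : γ < 1) (ha : 0 < a) : 1 < γ ^ (-a) :=
  Real.one_lt_rpow_of_pos_of_lt_one_of_neg hγ0 hγ1 (neg_neg_of_pos ha)

theorem Real.le_rpow_neg_one_div_of_le_rpow_neg {x y d : ℝ} (hx : 0 < x) (hy : 0 ≤ y)
    (hd : 0 < d) (h : x ≤ y ^ (-d)) : y ≤ x ^ (-1 / d) :=
  calc y = (y ^ (-d)) ^ (-1 / d) := by
        rw [← Real.rpow_mul hy, show -d * (-1 / d) = 1 by field_simp, Real.rpow_one]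
    _ ≤ x ^ (-1 / d) := Real.rpow_le_rpow_of_nonpos hx h (by rw [neg_div]; simpa using hd.le)

open Finset in
/-- Core algebraic step of Corollary 2: if
`n ≤ C·c^{−d}·(M/w)·((γ^{−w}−1)/(γ^{−1}−1))·∑_{k=0}^{H} γ^{−kwd/D}`, then
`c·γ^{(wH−w)/D} ≤ ((n/C)·(w/M)·((γ^{−w}−1)/(γ^{−1}−1))^{−1}·(γ^{wd/D}−γ^{2wd/D}))^{−1/d}`. -/
theorem stmt_10 (C c γ d : ℝ) (hC : 0 < C) (hc : 0 < c) (hγ0 : 0 < γ) (hγ1 : γ < 1)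
    (hd : 0 < d) (D w : ℕ) (hD : 0 < D) (hw : 0 < w) (M n : ℝ) (hM : 0 < M) (hn : 0 < n)
    (H : ℕ)
    (hmain : n ≤ C * c ^ (-d) * (M / (w : ℝ)) * ((γ ^ (-(w : ℝ)) - 1) / (γ ^ (-1 : ℝ) - 1)) *
      ∑ k ∈ Finset.range (H + 1), γ ^ (-((k : ℝ) * (w : ℝ) * d / (D : ℝ)))) :
    c * γ ^ (((w : ℝ) * (H : ℝ) - (w : ℝ)) / (D : ℝ)) ≤
      ((n / C) * ((w : ℝ) / M) * ((γ ^ (-(w : ℝ)) - 1) / (γ ^ (-1 : ℝ) - 1))⁻¹ *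
        (γ ^ ((w : ℝ) * d / (D : ℝ)) - γ ^ (2 * (w : ℝ) * d / (D : ℝ)))) ^ (-1 / d) := by
  set a : ℝ := (w : ℝ) * d / D with ha_def
  set q : ℝ := γ ^ (-a) with hq_def
  set A := (γ ^ (-(w : ℝ)) - 1) / (γ ^ (-1 : ℝ) - 1)
  have hq : 1 < q := Real.one_lt_rpow_neg hγ0 hγ1 (by positivity)
  have hA : 0 < A := div_pos (sub_pos.2 (Real.one_lt_rpow_neg hγ0 hγ1 (by positivity)))
    (sub_pos.2 (Real.one_lt_rpow_neg hγ0 hγ1 one_pos))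
  have hpow (z : ℝ) (k : ℕ) : γ ^ (z * k) = (γ ^ z) ^ k := Real.rpow_mul_natCast hγ0.le z k
  have hγa : γ ^ a = q⁻¹ := by rw [hq_def, Real.rpow_neg hγ0.le, inv_inv]
  have hsum : ∑ k ∈ range (H + 1), γ ^ (-((k : ℝ) * w * d / D)) = ∑ k ∈ range (H + 1), q ^ k :=
    sum_congr rfl fun k _ => by rw [← hpow, ha_def]; ring_nf
  have h2a : γ ^ (2 * (w : ℝ) * d / D) = q⁻¹ ^ 2 := by
    rw [← hγa, ← hpow, ha_def]; push_cast; ring_nf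
  have hlhs : (c * γ ^ (((w : ℝ) * H - w) / D)) ^ (-d) = c ^ (-d) * (q ^ H * q⁻¹) := by
    rw [Real.mul_rpow hc.le (by positivity), ← Real.rpow_mul hγ0.le, ← hγa, hq_def, ← hpow,
      ← Real.rpow_add hγ0, ha_def]
    ring_nf
  rw [h2a, hγa]
  refine Real.le_rpow_neg_one_div_of_le_rpow_neg ?_ (by positivity) hd ?_
  · have : 0 < q - 1 := sub_pos.2 hq
    rw [inv_sub_inv_sq_eq]
    positivity
  rw [hlhs, show n / C * (w / M) * A⁻¹ = n / (C * (M / w) * A) by field_simp]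
  refine div_mul_inv_sub_inv_sq_le_of_le_mul_geom_sum hq (by positivity) (by positivity) ?_
  rwa [← hsum, show C * (M / w) * A * c ^ (-d) = C * c ^ (-d) * (M / w) * A by ring]
end
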